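/- Let k be a field containing an element ζ, and let λ_ζ : T(V) → T(V) be the Hopf algebra map with λ_ζ(a) = ζ a for a ∈ V, χ : T(V) → T(V) the antipode (the anti-automorphism with χ(a) = −a for a ∈ V, so χ(a_1⋯a_n) = (−1)^n a_n⋯a_1), and θ_ζ = λ_ζ ∗ χ the convolution product, i.e., θ_ζ is the composite T(V) → T(V)⊗T(V) → T(V) of the comultiplication ψ, λ_ζ ⊗ χ, and multiplication. Then θ_ζ is a coalgebra map, and for every primitive element α ∈ T(V) of tensor length n, θ_ζ(α) = (ζ^n − 1) α. -/

import Mathlib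

open TensorProduct

section
variable (k : Type) [Field k] (V : Type) [AddCommGroup V] [Module k V]

/-- The comultiplication `ψ` on `T(V)` making `V` primitive. -/
noncomputable def psi : TensorAlgebra k V →ₐ[k] TensorAlgebra k V ⊗[k] TensorAlgebra k V :=
  TensorAlgebra.lift k
    ((Algebra.TensorProduct.includeLeft :
        TensorAlgebra k V →ₐ[k] TensorAlgebra k V ⊗[k] TensorAlgebra k V).toLinearMap.comp
        (TensorAlgebra.ι k) +
      (Algebra.TensorProduct.includeRight :
        TensorAlgebra k V →ₐ[k] TensorAlgebra k V ⊗[k] TensorAlgebra k V).toLinearMap.comp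
        (TensorAlgebra.ι k))

/-- The Hopf algebra map `λ_ζ : T(V) → T(V)` with `λ_ζ(a) = ζ a` for `a ∈ V`. -/
noncomputable def lamZ (ζ : k) : TensorAlgebra k V →ₐ[k] TensorAlgebra k V :=
  TensorAlgebra.lift k (ζ • TensorAlgebra.ι k)

/-- The antipode `χ : T(V) → T(V)`: the anti-automorphism with `χ(a) = -a` for `a ∈ V`
(so `χ(a_1 ⋯ a_n) = (-1)^n a_n ⋯ a_1`), obtained from the algebra map into the opposite
algebra. -/
noncomputable def chi : TensorAlgebra k V →ₗ[k] TensorAlgebra k V :=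
  (MulOpposite.opLinearEquiv k).symm.toLinearMap.comp
    (TensorAlgebra.lift k
      ((MulOpposite.opLinearEquiv k).toLinearMap.comp
        (-(TensorAlgebra.ι k : V →ₗ[k] TensorAlgebra k V)))).toLinearMap

/-- The convolution `θ_ζ = λ_ζ ∗ χ = mult ∘ (λ_ζ ⊗ χ) ∘ ψ`. -/
noncomputable def thetaZ (ζ : k) : TensorAlgebra k V →ₗ[k] TensorAlgebra k V :=
  (LinearMap.mul' k (TensorAlgebra k V)).comp
    ((TensorProduct.map (lamZ k V ζ).toLinearMap (chi k V)).comp (psi k V).toLinearMap)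

/-- The degree-`n` homogeneous component `T_n(V)` of `T(V)`. -/
noncomputable def Tpiece (n : ℕ) : Submodule k (TensorAlgebra k V) :=
  LinearMap.range (TensorAlgebra.ι k : V →ₗ[k] TensorAlgebra k V) ^ n

end

/-!
Everything follows from the recursion `θ_ζ(a x) = ζ a θ_ζ(x) - θ_ζ(x) a` for `a ∈ V`, which
comes from `ψ(a x) = (a ⊗ 1 + 1 ⊗ a) ψ(x)` because `λ_ζ` is multiplicative and `χ`
anti-multiplicative. Since `T(V)` is spanned by `1` and closed under left multiplication by `V`,
it gives `ψ ∘ θ_ζ = (θ_ζ ⊗ θ_ζ) ∘ ψ`, `ε ∘ θ_ζ = ε`, and for `ζ = 1` the antipode identity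
`id ∗ χ = η ∘ ε`. On a primitive `α` of length `n`, `θ_ζ(α) = λ_ζ(α) + χ(α) = ζ^n α + χ(α)`,
and the antipode identity together with `ε(α) = 0` gives `χ(α) = -α`.
-/

open TensorProduct TensorAlgebra

namespace TensorAlgebra

variable {R M N : Type*} [CommSemiring R] [AddCommMonoid M] [Module R M]
  [AddCommMonoid N] [Module R N]

theorem algebraMapInv_ι (m : M) : algebraMapInv (ι R m) = (0 : R) := by
  simp [algebraMapInv]

theorem linearMap_ext_of_ι_mul {f g : TensorAlgebra R M →ₗ[R] N} (h1 : f 1 = g 1)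
    (hι : ∀ a x, f x = g x → f (ι R a * x) = g (ι R a * x)) : f = g := by
  let P := LinearMap.eqLocus f g
  have hmul : ∀ x, ∀ y ∈ P, x * y ∈ P := by
    intro x
    induction x using TensorAlgebra.induction with
    | algebraMap r =>
      intro y hy
      rw [Algebra.algebraMap_eq_smul_one, smul_mul_assoc, one_mul]
      exact P.smul_mem r hy
    | ι a => exact hι a
    | mul x₁ x₂ h₁ h₂ => intro y hy; rw [mul_assoc]; exact h₁ _ (h₂ y hy)
    | add x₁ x₂ h₁ h₂ => intro y hy; rw [add_mul]; exact P.add_mem (h₁ y hy) (h₂ y hy)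
  ext x
  simpa [P] using hmul x 1 h1

end TensorAlgebra

section

variable {k : Type} [Field k] {V : Type} [AddCommGroup V] [Module k V]

theorem psi_ι (a : V) : psi k V (ι k a) = ι k a ⊗ₜ[k] 1 + 1 ⊗ₜ[k] ι k a := by
  simp [psi]

theorem lamZ_ι (ζ : k) (a : V) : lamZ k V ζ (ι k a) = ζ • ι k a := by
  simp [lamZ]

theorem lamZ_one : lamZ k V 1 = AlgHom.id k (TensorAlgebra k V) := by
  ext a
  simp [lamZ]

theorem lamZ_of_mem_Tpiece (ζ : k) {n : ℕ} {α : TensorAlgebra k V} (hα : α ∈ Tpiece k V n) :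
    lamZ k V ζ α = ζ ^ n • α := by
  induction hα using Submodule.pow_induction_on_left' with
  | algebraMap r => simp
  | add x y i _ _ ihx ihy => rw [map_add, ihx, ihy, smul_add]
  | mem_mul m hm i x _ ih =>
    obtain ⟨a, rfl⟩ := hm
    rw [map_mul, lamZ_ι, ih, smul_mul_assoc, mul_smul_comm, smul_smul, pow_succ']

theorem chi_ι (a : V) : chi k V (ι k a) = -ι k a := by
  simp [chi]

theorem chi_one : chi k V 1 = 1 := by
  simp [chi]

theorem chi_mul (x y : TensorAlgebra k V) : chi k V (x * y) = chi k V y * chi k V x := by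
  simp [chi]

theorem thetaZ_map_one (ζ : k) : thetaZ k V ζ 1 = 1 := by
  simp [thetaZ, chi_one, Algebra.TensorProduct.one_def]

theorem thetaZ_of_primitive (ζ : k) {α : TensorAlgebra k V}
    (hα : psi k V α = α ⊗ₜ[k] 1 + 1 ⊗ₜ[k] α) :
    thetaZ k V ζ α = lamZ k V ζ α + chi k V α := by
  simp [thetaZ, hα, chi_one]

theorem thetaZ_ι_mul (ζ : k) (a : V) (x : TensorAlgebra k V) :
    thetaZ k V ζ (ι k a * x) = ζ • (ι k a * thetaZ k V ζ x) - thetaZ k V ζ x * ι k a := by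
  let f := (LinearMap.mul' k (TensorAlgebra k V)).comp
    (map (lamZ k V ζ).toLinearMap (chi k V))
  have hf : ∀ t, f ((ι k a ⊗ₜ[k] 1 + 1 ⊗ₜ[k] ι k a) * t) = ζ • (ι k a * f t) - f t * ι k a := by
    intro t
    induction t using TensorProduct.induction_on with
    | zero => simp
    | tmul x y =>
      simp only [f, add_mul, Algebra.TensorProduct.tmul_mul_tmul, one_mul, map_add,
        LinearMap.comp_apply, map_tmul, LinearMap.mul'_apply, map_mul,
        AlgHom.toLinearMap_apply, lamZ_ι, chi_mul, chi_ι, mul_neg, smul_mul_assoc, mul_assoc]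
      abel
    | add u v hu hv =>
      rw [mul_add, map_add, hu, hv, map_add, mul_add, smul_add, add_mul]
      abel
  change f (psi k V (ι k a * x)) = _
  rw [map_mul, psi_ι, hf]
  rfl

theorem map_thetaZ_primitive_mul (ζ : k) (a : V) (t : TensorAlgebra k V ⊗[k] TensorAlgebra k V) :
    map (thetaZ k V ζ) (thetaZ k V ζ) ((ι k a ⊗ₜ[k] 1 + 1 ⊗ₜ[k] ι k a) * t)
      = ζ • ((ι k a ⊗ₜ[k] 1 + 1 ⊗ₜ[k] ι k a) * map (thetaZ k V ζ) (thetaZ k V ζ) t)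
        - map (thetaZ k V ζ) (thetaZ k V ζ) t * (ι k a ⊗ₜ[k] 1 + 1 ⊗ₜ[k] ι k a) := by
  induction t using TensorProduct.induction_on with
  | zero => simp
  | tmul x y =>
    simp only [add_mul, mul_add, Algebra.TensorProduct.tmul_mul_tmul, one_mul, mul_one, map_add,
      map_tmul, thetaZ_ι_mul, sub_tmul, tmul_sub, smul_tmul', tmul_smul, smul_add]
    abel
  | add u v hu hv =>
    rw [mul_add, map_add, hu, hv, map_add]
    simp only [mul_add, add_mul, smul_add]
    abel

theorem psi_comp_thetaZ (ζ : k) :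
    (psi k V).toLinearMap.comp (thetaZ k V ζ)
      = (map (thetaZ k V ζ) (thetaZ k V ζ)).comp (psi k V).toLinearMap := by
  refine linearMap_ext_of_ι_mul ?_ fun a x hx => ?_
  · simp [thetaZ_map_one, Algebra.TensorProduct.one_def]
  · simp only [LinearMap.comp_apply, AlgHom.toLinearMap_apply] at hx ⊢
    rw [thetaZ_ι_mul, map_sub, map_smul, map_mul, map_mul, psi_ι, hx, map_mul, psi_ι,
      map_thetaZ_primitive_mul]

theorem algebraMapInv_comp_thetaZ (ζ : k) :
    (algebraMapInv : TensorAlgebra k V →ₐ[k] k).toLinearMap.comp (thetaZ k V ζ)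
      = (algebraMapInv : TensorAlgebra k V →ₐ[k] k).toLinearMap := by
  refine linearMap_ext_of_ι_mul ?_ fun a x _ => ?_
  · simp [thetaZ_map_one]
  · simp [thetaZ_ι_mul, algebraMapInv_ι]

theorem thetaZ_one :
    thetaZ k V 1 = (Algebra.linearMap k (TensorAlgebra k V)).comp
      (algebraMapInv : TensorAlgebra k V →ₐ[k] k).toLinearMap := by
  refine linearMap_ext_of_ι_mul ?_ fun a x hx => ?_
  · simp [thetaZ_map_one]
  · simp only [LinearMap.comp_apply, AlgHom.toLinearMap_apply, Algebra.linearMap_apply] at hx ⊢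
    rw [thetaZ_ι_mul, hx, one_smul, Algebra.commutes, sub_self, map_mul, algebraMapInv_ι,
      zero_mul, map_zero]

theorem algebraMapInv_of_primitive {α : TensorAlgebra k V}
    (hα : psi k V α = α ⊗ₜ[k] 1 + 1 ⊗ₜ[k] α) : algebraMapInv α = (0 : k) := by
  let ε : TensorAlgebra k V →ₐ[k] k := algebraMapInv
  -- `(ε ⊗ ε) ∘ ψ = ε` because both are algebra maps killing `V`; on `α` it reads `ε α = 2 ε α`.
  have hcounit : ((Algebra.TensorProduct.lmul' k).comp
      (Algebra.TensorProduct.map ε ε)).comp (psi k V) = ε := by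
    ext a
    simp [ε, psi_ι, algebraMapInv_ι]
  have h := AlgHom.congr_fun hcounit α
  simp only [AlgHom.comp_apply, hα, map_add, Algebra.TensorProduct.map_tmul, map_one,
    Algebra.TensorProduct.lmul'_apply_tmul, mul_one, one_mul] at h
  linear_combination h

theorem chi_of_primitive {α : TensorAlgebra k V}
    (hα : psi k V α = α ⊗ₜ[k] 1 + 1 ⊗ₜ[k] α) : chi k V α = -α := by
  have h := LinearMap.congr_fun thetaZ_one α
  rw [thetaZ_of_primitive 1 hα, lamZ_one] at h
  simp only [AlgHom.coe_id, id_eq, LinearMap.comp_apply, AlgHom.toLinearMap_apply,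
    algebraMapInv_of_primitive hα, map_zero] at h
  exact eq_neg_of_add_eq_zero_right h

end

/-- `θ_ζ = λ_ζ ∗ χ` is a coalgebra map, and on a primitive element `α` of tensor length `n` it
acts by `θ_ζ(α) = (ζ^n - 1) α`. -/
theorem stmt14 (k : Type) [Field k] (V : Type) [AddCommGroup V] [Module k V] (ζ : k) :
    -- λ_ζ scales V by ζ
    (∀ a : V, lamZ k V ζ (TensorAlgebra.ι k a) = ζ • TensorAlgebra.ι k a) ∧
    -- χ negates V
    (∀ a : V, chi k V (TensorAlgebra.ι k a) = -TensorAlgebra.ι k a) ∧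
    -- θ_ζ is a coalgebra map
    ((psi k V).toLinearMap.comp (thetaZ k V ζ)
      = (TensorProduct.map (thetaZ k V ζ) (thetaZ k V ζ)).comp (psi k V).toLinearMap) ∧
    ((TensorAlgebra.algebraMapInv :
        TensorAlgebra k V →ₐ[k] k).toLinearMap.comp (thetaZ k V ζ)
      = (TensorAlgebra.algebraMapInv : TensorAlgebra k V →ₐ[k] k).toLinearMap) ∧
    -- action on primitives of tensor length n
    (∀ (n : ℕ) (α : TensorAlgebra k V), α ∈ Tpiece k V n →
      psi k V α = α ⊗ₜ[k] 1 + 1 ⊗ₜ[k] α →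
      thetaZ k V ζ α = (ζ ^ n - 1) • α) := by
  refine ⟨lamZ_ι ζ, chi_ι, psi_comp_thetaZ ζ, algebraMapInv_comp_thetaZ ζ, ?_⟩
  intro n α hlen hprim
  rw [thetaZ_of_primitive ζ hprim, lamZ_of_mem_Tpiece ζ hlen, chi_of_primitive hprim, sub_smul,
    one_smul, sub_eq_add_neg]
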